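/- arXiv:1604.01757 — 2 statements merged into one kernel-verified Lean document; each statement's English description precedes it below -/
import Mathlib

section
/- Let r, s, t be elements of a finite semigroup S such that s does not generate a group and rs = st = s. Then there exist idempotents e, f ∈ S with es = s and sf = s such that every product a₁⋯a_k with each a_i ∈ {s, e, f} in which s occurs at least twice does not equal s. -/
/-- `a ≤_J b` in a semigroup `S`: the principal ideal condition `S¹aS¹ ⊆ S¹bS¹`,
i.e. `a = u * b * v` for some `u v ∈ S¹`. -/
def JLe {S : Type*} [Semigroup S] (a b : S) : Prop :=
  ∃ u v : WithOne S, (a : WithOne S) = u * (b : WithOne S) * v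

/-- Green's `J`-equivalence. -/
def JEquiv {S : Type*} [Semigroup S] (a b : S) : Prop := JLe a b ∧ JLe b a

/-- `a` is strictly `J`-below `b`. -/
def JLt {S : Type*} [Semigroup S] (a b : S) : Prop := JLe a b ∧ ¬ JLe b a

/-- `s` generates a group: the cyclic subsemigroup generated by `s` is a group,
i.e. it contains a two-sided identity and inverses. -/
def GeneratesGroup {S : Type*} [Semigroup S] (s : S) : Prop :=
  ∃ e ∈ Subsemigroup.closure {s},
    (∀ x ∈ Subsemigroup.closure {s}, e * x = x ∧ x * e = x) ∧
    ∀ x ∈ Subsemigroup.closure {s}, ∃ y ∈ Subsemigroup.closure {s}, x * y = e ∧ y * x = e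


/-- The product `a₁ ⋯ aₖ` of a nonempty list, given as head `a` and tail `l`,
with respect to a multiplication `mul`. -/
def listProd {α : Type*} (mul : α → α → α) : α → List α → α
  | a, [] => a
  | a, b :: l => mul a (listProd mul b l)

/-!
In a finite monoid, `s = X * s * Y` implies `X ^ ω * s = s = s * Y ^ ω`, where `X ^ ω` is the
idempotent power of `X`; all products below are taken in `S¹ = WithOne S`.

If `s` is regular, say `s * x * s = s`, take `e = s * x` and `f = x * s`. A product with two
occurrences of `s` lies in `S¹ s² S¹`, since `s * f = s` and `s * e`, `s * s` start with `s²`.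
But `s ∈ S¹ s² S¹` gives `s ^ (n + 2) = s`, so `s` would generate a group.

Otherwise take for `e` and `f` the idempotent powers of `r` and `t`. A product equal to `s` with
two occurrences of `s` has the form `X * s * Z * s * Y`, and iterating gives `s ∈ s S¹ s`, so
`s` would be regular.
-/

section Monoid

variable {M : Type*} [Monoid M]

theorem pow_add_one_add_mul_eq {x : M} {p : ℕ} (h : x ^ (p + 1) = x) (a k : ℕ) :
    x ^ (a + 1 + p * k) = x ^ (a + 1) := by
  induction k with
  | zero => simp
  | succ k ih =>
    rw [show a + 1 + p * (k + 1) = a + p * k + (p + 1) by ring, pow_add, h, ← pow_succ,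
      show a + p * k + 1 = a + 1 + p * k by ring, ih]

theorem exists_mul_prod_mul_eq_sq_mul {s x : M} (hx : s * x * s = s) :
    ∀ v : List M, (∀ y ∈ v, y ∈ ({s, s * x, x * s} : Set M)) →
      ∃ C, s * v.prod * s = s ^ 2 * C
  | [], _ => ⟨1, by simp [sq]⟩
  | y :: v, hv => by
    rcases hv y List.mem_cons_self with rfl | rfl | rfl
    · exact ⟨v.prod * y, by simp only [List.prod_cons, sq, mul_assoc]⟩
    · exact ⟨x * v.prod * s, by simp only [List.prod_cons, sq, mul_assoc]⟩
    · obtain ⟨C, hC⟩ :=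
        exists_mul_prod_mul_eq_sq_mul hx v fun z hz => hv z (List.mem_cons_of_mem _ hz)
      refine ⟨C, ?_⟩
      rw [List.prod_cons, ← mul_assoc, ← mul_assoc, hx, hC]

variable [Finite M]

theorem exists_isIdempotentElem_pow_succ (x : M) : ∃ n, IsIdempotentElem (x ^ (n + 1)) := by
  obtain ⟨i, j, hne, hij⟩ := Finite.exists_ne_map_eq_of_infinite (x ^ · : ℕ → M)
  wlog hlt : i < j generalizing i j
  · exact this j i hne.symm hij.symm (by omega)
  obtain ⟨p, rfl⟩ : ∃ p, j = i + (p + 1) := ⟨j - i - 1, by omega⟩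
  have hper : ∀ a k, x ^ (i + a + (p + 1) * k) = x ^ (i + a) := by
    intro a k
    induction k with
    | zero => simp
    | succ k ih =>
      rw [show i + a + (p + 1) * (k + 1) = i + (p + 1) + (a + (p + 1) * k) by ring, pow_add,
        ← hij, ← pow_add, ← add_assoc, ih]
  -- `(p + 1) * (i + 1)` is a multiple of the period that lies beyond the preperiod `i`
  refine ⟨(p + 1) * (i + 1) - 1, ?_⟩
  rw [IsIdempotentElem, ← pow_add, Nat.sub_add_cancel (Nat.mul_pos (by omega) (by omega))]
  have h := hper ((p + 1) * (i + 1) - i) (i + 1)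
  rwa [Nat.add_sub_cancel' (by nlinarith)] at h

theorem exists_pow_succ_mul_eq_and_mul_pow_succ_eq {s X Y : M} (h : s = X * s * Y) :
    ∃ n, X ^ (n + 1) * s = s ∧ s * Y ^ (n + 1) = s := by
  have hiter : ∀ n, X ^ n * s * Y ^ n = s := by
    intro n
    induction n with
    | zero => simp
    | succ n ih =>
      rw [pow_succ, pow_succ', show X ^ n * X * s * (Y * Y ^ n) = X ^ n * (X * s * Y) * Y ^ n by
        simp only [mul_assoc], ← h, ih]
  obtain ⟨n, hidem⟩ := exists_isIdempotentElem_pow_succ X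
  have hX : X ^ (n + 1) * s = s := by
    conv_lhs => rw [← hiter (n + 1)]
    rw [← mul_assoc, ← mul_assoc, hidem.eq, hiter]
  refine ⟨n, hX, ?_⟩
  conv_lhs => rw [← hX]
  exact hiter (n + 1)

theorem exists_pow_add_two_eq_of_eq_mul_sq_mul {s A B : M} (h : s = A * s ^ 2 * B) :
    ∃ n, s ^ (n + 2) = s := by
  obtain ⟨m, -, hm⟩ := exists_pow_succ_mul_eq_and_mul_pow_succ_eq (s := s) (X := A) (Y := s * B)
    (h.trans (by rw [sq]; simp only [mul_assoc]))
  obtain ⟨n, hn, -⟩ := exists_pow_succ_mul_eq_and_mul_pow_succ_eq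
    (s := s) (X := s) (Y := B * (s * B) ^ m)
    (by conv_lhs => rw [← hm]
        rw [pow_succ']; simp only [mul_assoc])
  exact ⟨n, by rw [pow_succ, hn]⟩

theorem exists_eq_mul_mul_of_eq_mul_mul_mul_mul {s X Y Z : M} (h : s = X * s * Z * s * Y) :
    ∃ W, s = s * W * s := by
  obtain ⟨n, hn, -⟩ := exists_pow_succ_mul_eq_and_mul_pow_succ_eq (X := X * s * Z) (Y := Y) h
  obtain ⟨m, -, hm⟩ := exists_pow_succ_mul_eq_and_mul_pow_succ_eq
    (s := s) (X := X) (Y := Z * (X * s * Z) ^ n * s)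
    (by conv_lhs => rw [← hn]
        rw [pow_succ']; simp only [mul_assoc])
  refine ⟨(Z * (X * s * Z) ^ n * s) ^ m * (Z * (X * s * Z) ^ n), ?_⟩
  conv_lhs => rw [← hm]
  rw [pow_succ]; simp only [mul_assoc]

end Monoid

theorem List.exists_eq_append_cons_append_cons_of_two_le_count {α : Type*} [DecidableEq α]
    {a : α} {l : List α} (h : 2 ≤ l.count a) :
    ∃ l₁ l₂ l₃, l = l₁ ++ a :: (l₂ ++ a :: l₃) := by
  obtain ⟨l₁, r, rfl, ha⟩ :=
    List.eq_append_cons_of_mem (List.count_pos_iff.mp (by omega : 0 < l.count a))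
  have hr : a ∈ r := by
    rw [List.count_append, List.count_eq_zero_of_not_mem ha, List.count_cons_self] at h
    exact List.count_pos_iff.mp (by omega : 0 < r.count a)
  obtain ⟨l₂, l₃, rfl⟩ := List.append_of_mem hr
  exact ⟨l₁, l₂, l₃, rfl⟩

section Semigroup

variable {S : Type*} [Semigroup S]

instance [Finite S] : Finite (WithOne S) := inferInstanceAs (Finite (Option S))

theorem coe_listProd (a : S) (l : List S) :
    ((listProd (· * ·) a l : S) : WithOne S) = ((a :: l).map ((↑) : S → WithOne S)).prod := by
  induction l generalizing a with
  | nil => simp [listProd]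
  | cons b l ih => simp [listProd, ih]

theorem exists_coe_listProd_eq_mul_mul [DecidableEq S] {s a : S} {l : List S}
    (h : 2 ≤ (a :: l).count s) :
    ∃ (X Y : WithOne S) (v : List S), (∀ y ∈ v, y ∈ a :: l) ∧
      ((listProd (· * ·) a l : S) : WithOne S) = X * s * (v.map (↑)).prod * s * Y := by
  obtain ⟨l₁, l₂, l₃, hl⟩ := List.exists_eq_append_cons_append_cons_of_two_le_count h
  refine ⟨(l₁.map (↑)).prod, (l₃.map (↑)).prod, l₂, fun y hy => by simp [hl, hy], ?_⟩
  rw [coe_listProd, hl]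
  simp only [List.map_append, List.map_cons, List.prod_append, List.prod_cons, mul_assoc]

theorem exists_mul_mul_eq_of_coe_eq_mul_mul {s : S} {W : WithOne S}
    (h : (s : WithOne S) = s * W * s) : ∃ x, s * x * s = s := by
  induction W using WithOne.recOneCoe with
  | one =>
    have hs : (s : WithOne S) = s * s := by simpa using h
    exact ⟨s, WithOne.coe_inj.mp (by rw [WithOne.coe_mul, WithOne.coe_mul, ← hs, ← hs])⟩
  | coe w => exact ⟨w, WithOne.coe_inj.mp (by simpa using h.symm)⟩

theorem exists_mem_closure_coe_eq_pow (x : S) (n : ℕ) :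
    ∃ a ∈ Subsemigroup.closure {x}, (a : WithOne S) = (x : WithOne S) ^ (n + 1) := by
  induction n with
  | zero => exact ⟨x, Subsemigroup.subset_closure rfl, by simp⟩
  | succ n ih =>
    obtain ⟨a, ha, hax⟩ := ih
    exact ⟨a * x, mul_mem ha (Subsemigroup.subset_closure rfl),
      by rw [WithOne.coe_mul, hax, ← pow_succ]⟩

theorem exists_coe_eq_pow_of_mem_closure {x a : S} (ha : a ∈ Subsemigroup.closure {x}) :
    ∃ n, (a : WithOne S) = (x : WithOne S) ^ (n + 1) := by
  induction ha using Subsemigroup.closure_induction with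
  | mem y hy => exact ⟨0, by rw [Set.mem_singleton_iff.mp hy, zero_add, pow_one]⟩
  | mul y z _ _ hy hz =>
    obtain ⟨m, hm⟩ := hy
    obtain ⟨n, hn⟩ := hz
    exact ⟨m + n + 1, by rw [WithOne.coe_mul, hm, hn, ← pow_add]; ring_nf⟩

theorem generatesGroup_of_coe_pow_add_two_eq {s : S} {n : ℕ}
    (h : (s : WithOne S) ^ (n + 2) = s) : GeneratesGroup s := by
  have hper := pow_add_one_add_mul_eq (p := n + 1) h
  obtain ⟨e, he_mem, he⟩ := exists_mem_closure_coe_eq_pow s n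
  refine ⟨e, he_mem, fun x hx => ?_, fun x hx => ?_⟩
  · obtain ⟨m, hm⟩ := exists_coe_eq_pow_of_mem_closure hx
    constructor <;> apply WithOne.coe_inj.mp <;>
      rw [WithOne.coe_mul, he, hm, ← pow_add, ← hper m 1] <;> ring_nf
  · obtain ⟨m, hm⟩ := exists_coe_eq_pow_of_mem_closure hx
    -- `m + 1` plus the exponent of the inverse is a multiple of the period `n + 1`
    obtain ⟨y, hy_mem, hy⟩ := exists_mem_closure_coe_eq_pow s (n * (m + 2))
    refine ⟨y, hy_mem, ?_, ?_⟩ <;> apply WithOne.coe_inj.mp <;>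
      rw [WithOne.coe_mul, he, hm, hy, ← pow_add, ← hper n (m + 1)] <;> ring_nf

variable [Finite S]

theorem exists_isIdempotentElem_mul_eq_of_mul_eq {r s : S} (h : r * s = s) :
    ∃ e, IsIdempotentElem e ∧ e * s = s := by
  obtain ⟨n, hidem⟩ := exists_isIdempotentElem_pow_succ (r : WithOne S)
  obtain ⟨e, -, he⟩ := exists_mem_closure_coe_eq_pow r n
  have hfix : Function.IsFixedPt ((r : WithOne S) * ·) s := by
    rw [Function.IsFixedPt, ← WithOne.coe_mul, h]
  refine ⟨e, WithOne.coe_inj.mp ?_, WithOne.coe_inj.mp ?_⟩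
  · rw [WithOne.coe_mul, he, hidem.eq]
  · rw [WithOne.coe_mul, he, ← mul_left_iterate_apply, hfix.iterate]

theorem exists_isIdempotentElem_mul_eq_of_mul_eq' {s t : S} (h : s * t = s) :
    ∃ f, IsIdempotentElem f ∧ s * f = s := by
  have : Finite Sᵐᵒᵖ := Finite.of_equiv S MulOpposite.opEquiv
  obtain ⟨f, hf, hfs⟩ := exists_isIdempotentElem_mul_eq_of_mul_eq (r := MulOpposite.op t)
    (s := MulOpposite.op s) (by rw [← MulOpposite.op_mul, h])
  exact ⟨f.unop, congrArg MulOpposite.unop hf, congrArg MulOpposite.unop hfs⟩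

end Semigroup

/-- If `r`, `s`, `t` are elements of a finite semigroup such that `s` does not generate a
group and `rs = st = s`, then there are idempotents `e`, `f` with `es = s` and `sf = s` such
that every product of elements of `{s, e, f}` in which `s` occurs at least twice is not `s`. -/
theorem stmt_3 {S : Type*} [Semigroup S] [Finite S] [DecidableEq S] (r s t : S)
    (hng : ¬ GeneratesGroup s) (hr : r * s = s) (ht : s * t = s) :
    ∃ e f : S, e * e = e ∧ f * f = f ∧ e * s = s ∧ s * f = s ∧
      ∀ (a : S) (l : List S), a ∈ ({s, e, f} : Set S) → (∀ x ∈ l, x ∈ ({s, e, f} : Set S)) →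
        2 ≤ (a :: l).count s → listProd (· * ·) a l ≠ s := by
  by_cases hreg : ∃ x, s * x * s = s
  · obtain ⟨x, hx⟩ := hreg
    refine ⟨s * x, x * s, by rw [← mul_assoc, hx], by rw [mul_assoc, ← mul_assoc s, hx], hx,
      by rw [← mul_assoc, hx], fun a l ha hl hcount hprod => ?_⟩
    obtain ⟨X, Y, v, hv, heq⟩ := exists_coe_listProd_eq_mul_mul hcount
    obtain ⟨C, hC⟩ := exists_mul_prod_mul_eq_sq_mul (s := (s : WithOne S)) (x := x)
      (by rw [← WithOne.coe_mul, ← WithOne.coe_mul, hx]) (v.map (↑)) (by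
        simp only [List.forall_mem_map]
        intro y hy
        rcases List.forall_mem_cons.mpr ⟨ha, hl⟩ y (hv y hy) with rfl | rfl | rfl <;> simp)
    rw [hprod] at heq
    have hs : (s : WithOne S) = X * s ^ 2 * (C * Y) := by
      rw [show X * (s : WithOne S) ^ 2 * (C * Y) = X * (s ^ 2 * C) * Y by simp only [mul_assoc],
        ← hC]
      exact heq.trans (by simp only [mul_assoc])
    obtain ⟨n, hn⟩ := exists_pow_add_two_eq_of_eq_mul_sq_mul hs
    exact hng (generatesGroup_of_coe_pow_add_two_eq hn)
  · obtain ⟨e, he, hes⟩ := exists_isIdempotentElem_mul_eq_of_mul_eq hr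
    obtain ⟨f, hf, hsf⟩ := exists_isIdempotentElem_mul_eq_of_mul_eq' ht
    refine ⟨e, f, he, hf, hes, hsf, fun a l _ _ hcount hprod => ?_⟩
    obtain ⟨X, Y, v, -, heq⟩ := exists_coe_listProd_eq_mul_mul hcount
    rw [hprod] at heq
    obtain ⟨W, hW⟩ := exists_eq_mul_mul_of_eq_mul_mul_mul_mul heq
    exact hreg (exists_mul_mul_eq_of_coe_eq_mul_mul hW)
end

section
/- Let S_P be a combinatorial Rees matrix semigroup with P of one block (P(λ,i) = 1 iff (λ,i) ∈ Δ × J for some J ⊆ I, Δ ⊆ Λ). Then for any finite A ⊆ S_P^n and b ∈ S_P^n, b lies in the subsemigroup of S_P^n generated by A if and only if b ∈ A or there exist a₁, a₂ ∈ A such that a₁ · d · a₂ = b, where d is the product over all a ∈ A with a(i) ∈ J × Δ for all i with b(i) ≠ 0. -/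
/-! With `P` of one block, a product `x₀ x₁ ⋯ xₖ z` in `S_P` equals `x₀ z` when every middle
factor lies in `J × Δ`, and `0` otherwise. So at a coordinate where `b` is nonzero, all middle
factors of a product equal to `b` lie in `J × Δ`; hence they all occur in `L`, and at every
coordinate the middle of the product can be replaced by `L` without changing its value. -/

/-- Elements of the combinatorial Rees matrix semigroup `S_P = (I × Λ) ∪ {0}`. -/
inductive RM (I Λ : Type*) where
  | zero : RM I Λ
  | elt  : I → Λ → RM I Λ

/-- The multiplication of `S_P`: `[i,λ]·[j,μ] = [i,μ]` if `P(λ,j) = 1` and `0` otherwise,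
with `0` a zero element. -/
def rmul {I Λ : Type*} (P : Λ → I → Bool) : RM I Λ → RM I Λ → RM I Λ
  | RM.elt i l, RM.elt j m => if P l j then RM.elt i m else RM.zero
  | _, _ => RM.zero


/-- Coordinatewise multiplication on the direct power `S_P ^ n`. -/
def pmul {I Λ : Type*} (P : Λ → I → Bool) {n : ℕ} (a b : Fin n → RM I Λ) : Fin n → RM I Λ :=
  fun i => rmul P (a i) (b i)


def RM.InBlock {I Λ : Type*} (J : Set I) (Δ : Set Λ) (x : RM I Λ) : Prop :=
  ∃ j ∈ J, ∃ d ∈ Δ, x = RM.elt j d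

lemma rmul_zero_right {I Λ : Type*} (P : Λ → I → Bool) (x : RM I Λ) :
    rmul P x RM.zero = RM.zero := by
  cases x <;> rfl

lemma listProd_pmul_apply {I Λ : Type*} (P : Λ → I → Bool) {n : ℕ}
    (g₀ : Fin n → RM I Λ) (gs : List (Fin n → RM I Λ)) (i : Fin n) :
    listProd (pmul P) g₀ gs i = listProd (rmul P) (g₀ i) (gs.map (· i)) := by
  induction gs generalizing g₀ with
  | nil => rfl
  | cons g gs ih => simp [listProd, pmul, ih g]

section OneBlock

variable {I Λ : Type*} {P : Λ → I → Bool} {J : Set I} {Δ : Set Λ}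

open Classical in
lemma rmul_rmul_eq_ite (hP : ∀ l i, P l i = true ↔ l ∈ Δ ∧ i ∈ J) (x y z : RM I Λ) :
    rmul P x (rmul P y z) = if y.InBlock J Δ then rmul P x z else RM.zero := by
  cases x <;> cases y <;> cases z <;> simp only [rmul, RM.InBlock, hP] <;> split_ifs <;>
    simp_all

open Classical in
lemma listProd_rmul_append_singleton (hP : ∀ l i, P l i = true ↔ l ∈ Δ ∧ i ∈ J)
    (x₀ z : RM I Λ) (xs : List (RM I Λ)) :
    listProd (rmul P) x₀ (xs ++ [z]) =
      if ∀ x ∈ xs, x.InBlock J Δ then rmul P x₀ z else RM.zero := by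
  induction xs generalizing x₀ with
  | nil => simp [listProd]
  | cons y ys ih =>
    rw [List.cons_append, listProd, ih]
    by_cases hys : ∀ x ∈ ys, x.InBlock J Δ
    · rw [if_pos hys, rmul_rmul_eq_ite hP]
      simp only [List.forall_mem_cons, and_iff_left hys]
    · rw [if_neg hys, rmul_zero_right]
      simp [hys]

open Classical in
lemma listProd_pmul_append_singleton_apply (hP : ∀ l i, P l i = true ↔ l ∈ Δ ∧ i ∈ J) {n : ℕ}
    (g₀ g : Fin n → RM I Λ) (gs : List (Fin n → RM I Λ)) (i : Fin n) :
    listProd (pmul P) g₀ (gs ++ [g]) i =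
      if ∀ x ∈ gs, (x i).InBlock J Δ then rmul P (g₀ i) (g i) else RM.zero := by
  simp [listProd_pmul_apply, listProd_rmul_append_singleton hP]

end OneBlock

theorem stmt_12_general {I Λ : Type*} (P : Λ → I → Bool) (J : Set I) (Δ : Set Λ)
    (hP : ∀ (l : Λ) (i : I), P l i = true ↔ l ∈ Δ ∧ i ∈ J)
    (n : ℕ) (A : Finset (Fin n → RM I Λ)) (b : Fin n → RM I Λ)
    (L : List (Fin n → RM I Λ))
    (hL : ∀ x, x ∈ L ↔ x ∈ A ∧ ∀ i : Fin n, b i ≠ RM.zero →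
      ∃ j ∈ J, ∃ d ∈ Δ, x i = RM.elt j d) :
    (∃ (g₀ : Fin n → RM I Λ) (gs : List (Fin n → RM I Λ)),
        g₀ ∈ A ∧ (∀ x ∈ gs, x ∈ A) ∧ listProd (pmul P) g₀ gs = b) ↔
      (b ∈ A ∨ ∃ a₁ ∈ A, ∃ a₂ ∈ A, listProd (pmul P) a₁ (L ++ [a₂]) = b) := by
  classical
  constructor
  · rintro ⟨g₀, gs, hg₀, hgs, hb⟩
    rcases List.eq_nil_or_concat gs with rfl | ⟨mid, g, rfl⟩
    · exact .inl (hb ▸ hg₀)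
    rw [List.concat_eq_append] at hgs hb
    have hmid : ∀ x ∈ mid, x ∈ L := by
      refine fun x hx => (hL x).2 ⟨hgs x (by simp [hx]), fun i hi => ?_⟩
      rw [← hb, listProd_pmul_append_singleton_apply hP] at hi
      exact (ite_ne_right_iff.1 hi).1 x hx
    refine .inr ⟨g₀, hg₀, g, hgs g (by simp), funext fun i => ?_⟩
    rw [listProd_pmul_append_singleton_apply hP]
    by_cases hLi : ∀ x ∈ L, (x i).InBlock J Δ
    · rw [if_pos hLi, ← hb, listProd_pmul_append_singleton_apply hP,
        if_pos fun x hx => hLi x (hmid x hx)]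
    · rw [if_neg hLi]
      by_contra hbi
      exact hLi fun x hx => ((hL x).1 hx).2 i (Ne.symm hbi)
  · rintro (hb | ⟨a₁, ha₁, a₂, ha₂, hprod⟩)
    · exact ⟨b, [], hb, by simp, rfl⟩
    · refine ⟨a₁, L ++ [a₂], ha₁, fun x hx => ?_, hprod⟩
      rcases List.mem_append.1 hx with hx | hx
      · exact ((hL x).1 hx).1
      · exact (List.mem_singleton.1 hx) ▸ ha₂

/-- If `P` has one block (witnessed by `J ⊆ I`, `Δ ⊆ Λ`), `A ⊆ S_P ^ n` is finite, and `L`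
enumerates (without repetition, in some fixed order) those `a ∈ A` with `a i ∈ J × Δ` for
all coordinates `i` with `b i ≠ 0`, then `b` lies in the subsemigroup of `S_P ^ n`
generated by `A` (i.e. is a nonempty product of elements of `A`) iff `b ∈ A` or
`a₁ · d · a₂ = b` for some `a₁, a₂ ∈ A`, where `d` is the product of `L`. -/
theorem stmt_12 {I Λ : Type*} (P : Λ → I → Bool) (J : Set I) (Δ : Set Λ)
    (hP : ∀ (l : Λ) (i : I), P l i = true ↔ l ∈ Δ ∧ i ∈ J)
    (n : ℕ) (A : Finset (Fin n → RM I Λ)) (b : Fin n → RM I Λ)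
    (L : List (Fin n → RM I Λ)) (hnd : L.Nodup)
    (hL : ∀ x, x ∈ L ↔ x ∈ A ∧ ∀ i : Fin n, b i ≠ RM.zero →
      ∃ j ∈ J, ∃ d ∈ Δ, x i = RM.elt j d) :
    (∃ (g₀ : Fin n → RM I Λ) (gs : List (Fin n → RM I Λ)),
        g₀ ∈ A ∧ (∀ x ∈ gs, x ∈ A) ∧ listProd (pmul P) g₀ gs = b) ↔
      (b ∈ A ∨ ∃ a₁ ∈ A, ∃ a₂ ∈ A, listProd (pmul P) a₁ (L ++ [a₂]) = b) :=
  stmt_12_general P J Δ hP n A b L hL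
end
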